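/- arXiv:0810.3947 — 4 statements merged into one kernel-verified Lean document; each statement's English description precedes it below -/
import Mathlib

section
/- For nonnegative reals y_I (I ⊆ [n]), the Minkowski sum Σ_I y_I Δ_I of dilated faces of the standard simplex equals the generalized permutohedron P_n({z_I}) where z_I = Σ_{J ⊆ I} y_J. -/
/-!
Both sides are convex polytopes. The vertices `∑ y_I e_{c(I)}` (with `c(I) ∈ I`) of the Minkowski
sum satisfy the inequalities defining `P_n`, which is convex. Conversely, for `t ∈ P_n` and any
weight `w`, the sum `∑ tᵢ wᵢ` is at most the support function `∑ y_I max_{i ∈ I} wᵢ` of the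
Minkowski sum: peel a nonnegative `w` into layers `δ • 1_U`, each controlled by
`∑_{i ∈ U} tᵢ ≤ z_[n] - z_{[n] \ U} = ∑_{I ∩ U ≠ ∅} y_I`. Hahn–Banach separation then puts `t`
into the Minkowski sum.
-/

open Finset
open scoped Pointwise Classical

/-- The generalized permutohedron `P_n({z_I})`. -/
def genPerm (n : ℕ) (z : Finset (Fin n) → ℝ) : Set (Fin n → ℝ) :=
  {t | (∑ i, t i) = z Finset.univ ∧ ∀ I : Finset (Fin n), z I ≤ ∑ i ∈ I, t i}

/-- `Δ_J = conv{e_i : i ∈ J}`, the face of the standard simplex indexed by `J`. -/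
def simplexFace {α : Type*} [DecidableEq α] (J : Finset α) : Set (α → ℝ) :=
  convexHull ℝ {x | ∃ i ∈ J, x = Pi.single i (1 : ℝ)}

section SupportFunction

variable {ι : Type*} [Fintype ι] [DecidableEq ι] {s : Finset (Finset ι)} {y : Finset ι → ℝ}
  {t : ι → ℝ}

theorem sum_mul_le_sum_mul_of_nonneg (hy : ∀ J ∈ s, 0 ≤ y J) (hs : ∀ J ∈ s, J.Nonempty)
    (ht : ∀ U : Finset ι, ∑ i ∈ U, t i ≤ ∑ J ∈ s with ¬Disjoint J U, y J)
    (w : ι → ℝ) (hw : 0 ≤ w) (m : Finset ι → ℝ) (hm : ∀ J ∈ s, ∀ i ∈ J, w i ≤ m J) :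
    ∑ i, t i * w i ≤ ∑ J ∈ s, y J * m J := by
  induction hk : #{i | 0 < w i} using Nat.strong_induction_on generalizing w m with
  | _ k ih =>
  have hm0 : ∀ J ∈ s, 0 ≤ m J := fun J hJ =>
    have ⟨i, hi⟩ := hs J hJ
    (hw i).trans (hm J hJ i hi)
  set U : Finset ι := {i | 0 < w i}
  have hwU : ∀ i ∉ U, w i = 0 := fun i hi =>
    le_antisymm (not_lt.1 fun h => hi (mem_filter.2 ⟨mem_univ i, h⟩)) (hw i)
  rcases U.eq_empty_or_nonempty with hUe | hUne
  · have hw0 : ∀ i, w i = 0 := fun i => hwU i (hUe ▸ notMem_empty i)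
    simp only [hw0, mul_zero, sum_const_zero]
    exact sum_nonneg fun J hJ => mul_nonneg (hy J hJ) (hm0 J hJ)
  -- Peel off the layer `δ • 1_U` of `w`, where `δ` is the least positive value of `w`.
  obtain ⟨i₀, hi₀, hmin⟩ := U.exists_min_image w hUne
  set δ := w i₀
  have hδ : 0 < δ := (mem_filter.1 hi₀).2
  have hw_split : ∀ i, w i = max (w i - δ) 0 + if i ∈ U then δ else 0 := fun i => by
    by_cases hi : i ∈ U
    · simp [hi, hmin i hi]
    · simp [hi, hwU i hi, hδ.le]
  have hm_split : ∀ J ∈ s, max (m J - δ) 0 + (if ¬Disjoint J U then δ else 0) ≤ m J := by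
    intro J hJ
    by_cases hJU : Disjoint J U
    · simp [hJU, hm0 J hJ, hδ.le]
    · obtain ⟨j, hjJ, hjU⟩ := not_disjoint_iff.1 hJU
      simp [hJU, (hmin j hjU).trans (hm J hJ j hjJ)]
  have hcard : #{i | 0 < max (w i - δ) 0} < k := by
    refine hk ▸ card_lt_card ((ssubset_iff_of_subset fun i hi => ?_).2 ⟨i₀, hi₀, by simp [δ]⟩)
    simp only [mem_filter, mem_univ, true_and, lt_max_iff, lt_irrefl, or_false, sub_pos] at hi
    exact mem_filter.2 ⟨mem_univ i, hδ.trans hi⟩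
  have hIH := ih _ hcard (fun i => max (w i - δ) 0) (fun i => le_max_right _ _)
    (fun J => max (m J - δ) 0) (fun J hJ i hi => max_le_max (by linarith [hm J hJ i hi]) le_rfl)
    rfl
  calc ∑ i, t i * w i
      = ∑ i, t i * max (w i - δ) 0 + δ * ∑ i ∈ U, t i := by
        conv_lhs => rw [funext hw_split]
        simp [mul_add, sum_add_distrib, mul_sum, mul_comm]
    _ ≤ ∑ J ∈ s, y J * max (m J - δ) 0 + δ * ∑ J ∈ s with ¬Disjoint J U, y J :=
        add_le_add hIH (mul_le_mul_of_nonneg_left (ht U) hδ.le)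
    _ = ∑ J ∈ s, y J * (max (m J - δ) 0 + if ¬Disjoint J U then δ else 0) := by
        simp [mul_add, sum_add_distrib, mul_sum, sum_filter, mul_comm]
    _ ≤ ∑ J ∈ s, y J * m J :=
        sum_le_sum fun J hJ => mul_le_mul_of_nonneg_left (hm_split J hJ) (hy J hJ)

theorem sum_mul_le_sum_mul (hy : ∀ J ∈ s, 0 ≤ y J) (hs : ∀ J ∈ s, J.Nonempty)
    (hsum : ∑ i, t i = ∑ J ∈ s, y J)
    (ht : ∀ U : Finset ι, ∑ i ∈ U, t i ≤ ∑ J ∈ s with ¬Disjoint J U, y J)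
    (w : ι → ℝ) (m : Finset ι → ℝ) (hm : ∀ J ∈ s, ∀ i ∈ J, w i ≤ m J) :
    ∑ i, t i * w i ≤ ∑ J ∈ s, y J * m J := by
  set C := ∑ i, |w i|
  have hC : ∀ i, -w i ≤ C := fun i =>
    (neg_le_abs (w i)).trans (single_le_sum (fun j _ => abs_nonneg (w j)) (mem_univ i))
  have hshift := sum_mul_le_sum_mul_of_nonneg hy hs ht (fun i => w i + C)
    (fun i => neg_le_iff_add_nonneg'.1 (hC i)) (fun J => m J + C)
    (fun J hJ i hi => add_le_add_left (hm J hJ i hi) C)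
  simp only [mul_add, sum_add_distrib, ← sum_mul, hsum] at hshift
  linarith

end SupportFunction

theorem Set.Finite.finsetSum {ι M : Type*} [AddCommMonoid M] {s : Finset ι} {A : ι → Set M}
    (h : ∀ i ∈ s, (A i).Finite) : (∑ i ∈ s, A i).Finite := by
  induction s using Finset.cons_induction with
  | empty => simp
  | cons i s hi ih =>
    rw [sum_cons]
    exact (h i (mem_cons_self i s)).add (ih fun j hj => h j (mem_cons_of_mem hj))

section Vertices

variable {ι : Type*} [DecidableEq ι]

def simplexVertices (J : Finset ι) : Set (ι → ℝ) := {x | ∃ i ∈ J, x = Pi.single i (1 : ℝ)}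

theorem simplexFace_eq_convexHull (J : Finset ι) :
    simplexFace J = convexHull ℝ (simplexVertices J) := rfl

theorem finite_simplexVertices (J : Finset ι) : (simplexVertices J).Finite :=
  (J.finite_toSet.image fun i => Pi.single i (1 : ℝ)).subset
    (by rintro _ ⟨i, hi, rfl⟩; exact ⟨i, hi, rfl⟩)

theorem sum_smul_simplexFace_eq_convexHull (s : Finset (Finset ι)) (y : Finset ι → ℝ) :
    ∑ J ∈ s, y J • simplexFace J = convexHull ℝ (∑ J ∈ s, y J • simplexVertices J) := by
  simp only [convexHull_sum, convexHull_smul, simplexFace_eq_convexHull]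

theorem sum_apply_of_mem_smul_simplexVertices {a : ℝ} {J : Finset ι} {v : ι → ℝ}
    (hv : v ∈ a • simplexVertices J) (U : Finset ι) :
    ∃ i ∈ J, ∑ j ∈ U, v j = if i ∈ U then a else 0 := by
  obtain ⟨_, ⟨i, hi, rfl⟩, rfl⟩ := hv
  exact ⟨i, hi, by simp [Pi.single_apply]⟩

end Vertices

theorem sum_filter_subset_eq_sum_powerset {ι : Type*} [Fintype ι] [DecidableEq ι]
    {y : Finset ι → ℝ} (hy0 : y ∅ = 0) (U : Finset ι) :
    ∑ J ∈ (univ : Finset ι).powerset.filter (fun I => I.Nonempty) with J ⊆ U, y J =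
      ∑ J ∈ U.powerset, y J := by
  rw [filter_filter]
  refine sum_subset (fun J hJ => by simp_all) fun J hJU hJ => ?_
  simp_all [not_nonempty_iff_eq_empty]

section GenPerm

variable {n : ℕ} {y : Finset (Fin n) → ℝ} {t : Fin n → ℝ}

local notation "𝒮" =>
  Finset.filter (fun I => Finset.Nonempty I) (Finset.powerset (Finset.univ : Finset (Fin n)))

theorem convex_genPerm (z : Finset (Fin n) → ℝ) : Convex ℝ (genPerm n z) := by
  rintro a ⟨ha, ha'⟩ b ⟨hb, hb'⟩ α β hα hβ hαβ
  refine ⟨?_, fun I => ?_⟩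
  · simp [sum_add_distrib, ← mul_sum, ha, hb, ← add_mul, hαβ]
  · simp only [Pi.add_apply, Pi.smul_apply, smul_eq_mul, sum_add_distrib, ← mul_sum]
    have hz : z I = α * z I + β * z I := by rw [← add_mul, hαβ, one_mul]
    linarith [mul_le_mul_of_nonneg_left (ha' I) hα, mul_le_mul_of_nonneg_left (hb' I) hβ]

theorem sum_eq_of_mem_genPerm (hy0 : y ∅ = 0)
    (ht : t ∈ genPerm n fun I => ∑ J ∈ I.powerset, y J) : ∑ i, t i = ∑ J ∈ 𝒮, y J := by
  refine ht.1.trans ?_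
  dsimp only
  rw [← sum_filter_subset_eq_sum_powerset hy0 univ, filter_true_of_mem fun J _ => subset_univ J]

theorem sum_le_of_mem_genPerm (hy0 : y ∅ = 0)
    (ht : t ∈ genPerm n fun I => ∑ J ∈ I.powerset, y J) (U : Finset (Fin n)) :
    ∑ i ∈ U, t i ≤ ∑ J ∈ 𝒮 with ¬Disjoint J U, y J := by
  have hUc : ∑ J ∈ Uᶜ.powerset, y J ≤ ∑ i ∈ Uᶜ, t i := ht.2 Uᶜ
  rw [← sum_filter_subset_eq_sum_powerset hy0] at hUc
  have hsplit := sum_filter_add_sum_filter_not 𝒮 (fun J => J ⊆ Uᶜ) y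
  simp only [subset_compl_iff_disjoint_right] at hUc hsplit
  have hcompl := sum_add_sum_compl U t
  rw [sum_eq_of_mem_genPerm hy0 ht] at hcompl
  linarith

theorem sum_smul_simplexVertices_subset_genPerm (hy : ∀ I, 0 ≤ y I) (hy0 : y ∅ = 0) :
    ∑ I ∈ 𝒮, y I • simplexVertices I ⊆ genPerm n fun I => ∑ J ∈ I.powerset, y J := by
  intro x hx
  obtain ⟨g, hg, rfl⟩ := (Set.mem_finsetSum _ _ _).1 hx
  have hsum_comm (U : Finset (Fin n)) :
      ∑ i ∈ U, (∑ I ∈ 𝒮, g I) i = ∑ I ∈ 𝒮, ∑ i ∈ U, g I i := by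
    simp only [Finset.sum_apply]
    exact sum_comm
  refine ⟨?_, fun U => ?_⟩ <;> beta_reduce
  · rw [hsum_comm, ← sum_filter_subset_eq_sum_powerset hy0 univ,
      filter_true_of_mem fun J _ => subset_univ J]
    refine sum_congr rfl fun I hI => ?_
    obtain ⟨i, -, h⟩ := sum_apply_of_mem_smul_simplexVertices (hg hI) univ
    simpa using h
  · rw [hsum_comm, ← sum_filter_subset_eq_sum_powerset hy0 U, sum_filter]
    refine sum_le_sum fun I hI => ?_
    obtain ⟨i, hi, h⟩ := sum_apply_of_mem_smul_simplexVertices (hg hI) U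
    rw [h]
    split_ifs with hIU hiU hiU
    · rfl
    · exact absurd (hIU hi) hiU
    · exact hy I
    · rfl

theorem genPerm_subset_convexHull (hy : ∀ I, 0 ≤ y I) (hy0 : y ∅ = 0) :
    genPerm n (fun I => ∑ J ∈ I.powerset, y J) ⊆
      convexHull ℝ (∑ I ∈ 𝒮, y I • simplexVertices I) := by
  intro t ht
  -- `choose!` below needs `Nonempty (Fin n)`.
  rcases isEmpty_or_nonempty (Fin n) with _ | _
  · simp [Subsingleton.elim t 0, filter_singleton]
  by_contra hnot
  have hfin : (∑ I ∈ 𝒮, y I • simplexVertices I).Finite :=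
    Set.Finite.finsetSum fun I _ => (finite_simplexVertices I).smul_set
  obtain ⟨f, u, hfu, hut⟩ := geometric_hahn_banach_closed_point (convex_convexHull ℝ _)
    (hfin.isCompact_convexHull (𝕜 := ℝ)).isClosed hnot
  set w : Fin n → ℝ := fun i => f (Pi.single i 1)
  have hft : f t = ∑ i, t i * w i := by
    conv_lhs => rw [← univ_sum_single t]
    rw [map_sum]
    refine sum_congr rfl fun i _ => ?_
    rw [← smul_eq_mul, ← map_smul, ← Pi.single_smul', smul_eq_mul, mul_one]
  -- The vertex of `∑ y_J Δ_J` that maximizes `f` picks in each `J` a maximizer of `w`.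
  choose! c hcJ hcmax using fun J (hJ : J ∈ 𝒮) => J.exists_max_image w (mem_filter.1 hJ).2
  have hp : ∑ J ∈ 𝒮, y J • (Pi.single (c J) 1 : Fin n → ℝ) ∈
      convexHull ℝ (∑ I ∈ 𝒮, y I • simplexVertices I) :=
    subset_convexHull ℝ _ (Set.finsetSum_mem_finsetSum _ _ _ fun J hJ =>
      Set.smul_mem_smul_set ⟨c J, hcJ J hJ, rfl⟩)
  have hfp := hfu _ hp
  simp only [map_sum, map_smul, smul_eq_mul] at hfp
  have hsupp := sum_mul_le_sum_mul (fun J _ => hy J) (fun J hJ => (mem_filter.1 hJ).2)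
    (sum_eq_of_mem_genPerm hy0 ht) (sum_le_of_mem_genPerm hy0 ht) w (fun J => w (c J)) hcmax
  linarith

end GenPerm

/-- Proposition 2.2: for nonnegative `y_I`, the Minkowski sum `∑ y_I Δ_I` is the
generalized permutohedron `P_n({z_I})` with `z_I = ∑_{J ⊆ I} y_J`. -/
theorem sum_simplices_eq_genPerm (n : ℕ) (y : Finset (Fin n) → ℝ)
    (hy : ∀ I, 0 ≤ y I) (hy0 : y ∅ = 0) :
    ∑ I ∈ (Finset.univ : Finset (Fin n)).powerset.filter (fun I => I.Nonempty),
        y I • simplexFace I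
      = genPerm n (fun I => ∑ J ∈ I.powerset, y J) := by
  rw [sum_smul_simplexFace_eq_convexHull]
  exact (convexHull_min (sum_smul_simplexVertices_subset_genPerm hy hy0)
    (convex_genPerm _)).antisymm (genPerm_subset_convexHull hy hy0)
end

section
/- For any matroid M of rank r on ground set E, the matroid polytope satisfies the signed Minkowski sum decomposition P_M = Σ_{A⊆E} β̃(M/A) Δ_{E−A}, i.e., P_M + Σ_{A : β̃(M/A)<0} (−β̃(M/A)) Δ_{E−A} = Σ_{A : β̃(M/A)≥0} β̃(M/A) Δ_{E−A}. -/
open Finset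
open scoped Pointwise Classical

/-- The 0/1 indicator vector of a finite set `B`. -/
def indic {α : Type*} [DecidableEq α] (B : Finset α) : α → ℝ :=
  fun a => if a ∈ B then 1 else 0

/-- The matroid polytope: convex hull of the indicator vectors of the bases. -/
def matroidPolytope {α : Type*} [DecidableEq α] (E : Finset α) (r : Finset α → ℕ) :
    Set (α → ℝ) :=
  convexHull ℝ {x | ∃ B : Finset α, B ⊆ E ∧ B.card = r E ∧ r B = r E ∧ x = indic B}

/-- The beta invariant `β(M) = (−1)^{r(G)} ∑_{X⊆G} (−1)^{|X|} ρ(X)` of the matroid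
with ground set `G` and rank function `ρ`. -/
def betaInv {α : Type*} [DecidableEq α] (G : Finset α) (ρ : Finset α → ℕ) : ℤ :=
  (-1) ^ (ρ G) * ∑ X ∈ G.powerset, (-1) ^ X.card * (ρ X : ℤ)

/-- The signed beta invariant `β̃(M) = (−1)^{r(M)+1} β(M)`. -/
def betaT {α : Type*} [DecidableEq α] (G : Finset α) (ρ : Finset α → ℕ) : ℤ :=
  (-1) ^ (ρ G + 1) * betaInv G ρ

/-- The rank function of the contraction `M/A`. -/
def contr {α : Type*} [DecidableEq α] (r : Finset α → ℕ) (A : Finset α) :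
    Finset α → ℕ :=
  fun X => r (A ∪ X) - r A

/-!
Both sides are convex hulls of finite point sets, so by Hahn–Banach it suffices to compare their
support functions, which are additive and positively homogeneous under Minkowski combinations.
At a functional with weights `w i = f (Pi.single i 1)`, the support function of `P_M` is the
largest weight of a basis and that of `Δ_J` is `max_J w`. The claim thus becomes
`max_B w(B) = ∑_{A ⊊ E} β̃(M/A) · max_{E-A} w`, which follows by running the greedy algorithm:
if `e` has the largest weight, the heaviest bases of `M` are `e` together with the heaviest bases
of `M/e` (or just those when `e` is a loop), while on the right the terms with `e ∉ A` add up to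
`w e · ∑_{A ⊆ E-e} β̃(M/A) = w e · r {e}` by Möbius inversion and the terms with `e ∈ A` form the
same sum for `M/e`.
-/

structure IsRankFn {α : Type*} [DecidableEq α] (r : Finset α → ℕ) : Prop where
  le_card : ∀ A, r A ≤ A.card
  mono : ∀ A B, A ⊆ B → r A ≤ r B
  submod : ∀ A B, r (A ∪ B) + r (A ∩ B) ≤ r A + r B

namespace IsRankFn

variable {α : Type*} [DecidableEq α] {r : Finset α → ℕ}

theorem map_empty (hr : IsRankFn r) : r ∅ = 0 :=
  Nat.le_zero.mp (hr.le_card ∅)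

theorem singleton_le_one (hr : IsRankFn r) (e : α) : r {e} ≤ 1 :=
  hr.le_card {e}

theorem union_le (hr : IsRankFn r) (X Y : Finset α) : r (X ∪ Y) ≤ r X + r Y :=
  (Nat.le_add_right _ _).trans (hr.submod X Y)

theorem eq_card_of_subset (hr : IsRankFn r) {B C : Finset α} (hB : r B = B.card)
    (hCB : C ⊆ B) : r C = C.card := by
  have h := hr.union_le C (B \ C)
  rw [union_sdiff_of_subset hCB] at h
  have := hr.le_card C
  have := hr.le_card (B \ C)
  have := card_sdiff_add_card_eq_card hCB
  omega

theorem sdiff_add_card_le (hr : IsRankFn r) {C D : Finset α} (hDC : D ⊆ C)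
    (hD : ∀ b ∈ D, r (C.erase b) < r C) : r (C \ D) + D.card ≤ r C := by
  induction D using Finset.induction_on with
  | empty => simp
  | insert a D haD ih =>
    have hsub := hr.submod (C \ D) (C.erase a)
    have hunion : C \ D ∪ C.erase a = C := by
      ext x; by_cases x = a <;> aesop
    have hinter : C \ D ∩ C.erase a = C \ insert a D := by
      ext x; simp only [mem_inter, mem_sdiff, mem_erase, mem_insert]; tauto
    rw [hunion, hinter] at hsub
    have := ih ((subset_insert a D).trans hDC) fun b hb => hD b (mem_insert_of_mem hb)
    have := hD a (mem_insert_self a D)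
    rw [card_insert_of_notMem haD]
    omega

protected theorem contr (hr : IsRankFn r) (A : Finset α) : IsRankFn (contr r A) where
  le_card X := by
    have := hr.union_le A X
    have := hr.le_card X
    simp only [contr]
    omega
  mono X Y hXY := Nat.sub_le_sub_right (hr.mono _ _ (union_subset_union_right hXY)) _
  submod X Y := by
    have hsub := hr.submod (A ∪ X) (A ∪ Y)
    rw [← union_union_distrib_left, ← union_inter_distrib_left] at hsub
    have := hr.mono A (A ∪ X ∩ Y) subset_union_left
    have := hr.mono A (A ∪ X) subset_union_left
    have := hr.mono A (A ∪ Y) subset_union_left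
    have := hr.mono (A ∪ X ∩ Y) (A ∪ (X ∪ Y)) (union_subset_union_right inter_subset_union)
    simp only [contr]
    omega

theorem contr_contr (hr : IsRankFn r) (A B : Finset α) :
    contr (contr r A) B = contr r (A ∪ B) := by
  funext X
  have := hr.mono A (A ∪ B) subset_union_left
  have := hr.mono (A ∪ B) (A ∪ (B ∪ X)) (union_subset_union_right subset_union_left)
  simp only [contr, union_assoc]
  omega

theorem contr_singleton_of_loop (hr : IsRankFn r) {e : α} (he : r {e} = 0) :
    contr r {e} = r := by
  funext X
  have := hr.union_le {e} X
  have := hr.mono X ({e} ∪ X) subset_union_right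
  simp only [contr]
  omega

end IsRankFn

section Bases

variable {α : Type*} {r : Finset α → ℕ} {E F B : Finset α} {e : α}

def bases (E : Finset α) (r : Finset α → ℕ) : Finset (Finset α) :=
  E.powerset.filter fun B => B.card = r E ∧ r B = r E

theorem mem_bases : B ∈ bases E r ↔ B ⊆ E ∧ B.card = r E ∧ r B = r E := by
  rw [bases, mem_filter, mem_powerset]

variable [DecidableEq α]

theorem IsRankFn.bases_empty (hr : IsRankFn r) : bases ∅ r = {∅} := by
  ext B
  simp only [mem_bases, subset_empty, mem_singleton]
  refine ⟨fun h => h.1, ?_⟩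
  rintro rfl
  simp [hr.map_empty]

theorem IsRankFn.bases_insert_of_loop (hr : IsRankFn r) (he : r {e} = 0) :
    bases (insert e F) r = bases F r := by
  have hrank : r (insert e F) = r F := by
    have := hr.union_le {e} F
    have := hr.mono F ({e} ∪ F) subset_union_right
    rw [insert_eq]
    omega
  ext B
  simp only [mem_bases, hrank]
  refine ⟨fun ⟨hBE, hcard, hrB⟩ => ⟨fun x hx => ?_, hcard, hrB⟩,
    fun ⟨hBF, hcard, hrB⟩ => ⟨hBF.trans (subset_insert e F), hcard, hrB⟩⟩
  have heB : e ∉ B := fun heB => by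
    simpa [he] using hr.eq_card_of_subset (hrB.trans hcard.symm) (singleton_subset_iff.mpr heB)
  exact (mem_insert.mp (hBE hx)).resolve_left (ne_of_mem_of_not_mem hx heB)

theorem IsRankFn.insert_mem_bases_insert_iff (hr : IsRankFn r) (he : r {e} = 1) (heB : e ∉ B) :
    insert e B ∈ bases (insert e F) r ↔ B ∈ bases F (contr r {e}) := by
  have hcontr : ∀ X, r (insert e X) = contr r {e} X + 1 := fun X => by
    have := hr.mono {e} (insert e X) (singleton_subset_iff.mpr (mem_insert_self e X))
    rw [contr, ← insert_eq]
    omega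
  simp only [mem_bases, hcontr, card_insert_of_notMem heB, add_left_inj,
    insert_subset_insert_iff heB]

theorem IsRankFn.exists_insert_erase_mem_bases (hr : IsRankFn r) (hB : B ∈ bases E r)
    (he : e ∈ E) (heB : e ∉ B) (hloop : r {e} ≠ 0) :
    ∃ b ∈ B, insert e (B.erase b) ∈ bases E r := by
  obtain ⟨hBE, hcard, hrB⟩ := mem_bases.mp hB
  have hCE : insert e B ⊆ E := insert_subset he hBE
  have hrC : r (insert e B) = r E :=
    le_antisymm (hr.mono _ _ hCE) (hrB ▸ hr.mono _ _ (subset_insert e B))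
  -- otherwise `sdiff_add_card_le` would give `r {e} + |B| ≤ r (insert e B) = |B|`
  obtain ⟨b, hb, hrb⟩ : ∃ b ∈ B, r E ≤ r ((insert e B).erase b) := by
    by_contra! hlt
    have := hr.sdiff_add_card_le (subset_insert e B) (hrC ▸ hlt)
    rw [insert_sdiff_cancel heB, hrC, hcard] at this
    omega
  have hbe : b ≠ e := ne_of_mem_of_not_mem hb heB
  rw [erase_insert_of_ne hbe.symm] at hrb
  have hB'E : insert e (B.erase b) ⊆ E := insert_subset he ((erase_subset b B).trans hBE)
  refine ⟨b, hb, mem_bases.mpr ⟨hB'E, ?_, le_antisymm (hr.mono _ _ hB'E) hrb⟩⟩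
  rw [card_insert_of_notMem (fun h => heB (mem_of_mem_erase h)), card_erase_of_mem hb, hcard]
  have : 0 < B.card := card_pos.mpr ⟨b, hb⟩
  omega

end Bases

section MaxOver

variable {β : Type*} (w : β → ℝ)

/-- `max_{x ∈ J} w x`, with the junk value `0` for `J = ∅`. -/
noncomputable def maxOver (J : Finset β) : ℝ :=
  if h : J.Nonempty then J.sup' h w else 0

theorem maxOver_eq_sup' {J : Finset β} (hJ : J.Nonempty) : maxOver w J = J.sup' hJ w :=
  dif_pos hJ

@[simp]
theorem maxOver_empty : maxOver w ∅ = 0 :=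
  dif_neg Finset.not_nonempty_empty

theorem maxOver_image [DecidableEq β] {γ : Type*} (g : γ → β) (J : Finset γ) :
    maxOver w (J.image g) = maxOver (w ∘ g) J := by
  rcases J.eq_empty_or_nonempty with rfl | hJ
  · simp
  · rw [maxOver_eq_sup' w (hJ.image g), maxOver_eq_sup' _ hJ, sup'_image]

theorem maxOver_eq_of_isGreatest {J : Finset β} {a : ℝ} (h : IsGreatest (w '' J) a) :
    maxOver w J = a := by
  obtain ⟨⟨x, hx, rfl⟩, hmax⟩ := h
  rw [maxOver_eq_sup' w ⟨x, hx⟩]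
  exact le_antisymm (sup'_le _ _ fun y hy => hmax ⟨y, hy, rfl⟩) (le_sup' w hx)

theorem maxOver_insert_of_le [DecidableEq β] {J : Finset β} {e : β} (h : ∀ x ∈ J, w x ≤ w e) :
    maxOver w (insert e J) = w e := by
  refine maxOver_eq_of_isGreatest w ⟨⟨e, mem_insert_self e J, rfl⟩, ?_⟩
  rintro _ ⟨x, hx, rfl⟩
  rcases mem_insert.mp hx with rfl | hx
  exacts [le_rfl, h x hx]

end MaxOver

section Beta

variable {α : Type*} [DecidableEq α]

theorem betaT_eq_neg_sum (G : Finset α) (ρ : Finset α → ℕ) :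
    betaT G ρ = -∑ X ∈ G.powerset, (-1) ^ X.card * (ρ X : ℤ) := by
  rw [betaT, betaInv, ← mul_assoc, ← pow_add, Odd.neg_one_pow ⟨ρ G, by ring⟩, neg_one_mul]

/-- Möbius inversion on the Boolean lattice of subsets of `F`. -/
theorem sum_powerset_sum_powerset_sdiff {R : Type*} [CommRing R] (F : Finset α)
    (h : Finset α → R) :
    ∑ A ∈ F.powerset, ∑ X ∈ (F \ A).powerset, (-1) ^ X.card * h (A ∪ X) = h ∅ := by
  induction F using Finset.induction_on with
  | empty => simp
  | insert a F haF ih =>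
    rw [sum_powerset_insert haF, ← ih, ← sum_add_distrib]
    refine sum_congr rfl fun A hA => ?_
    have haA : a ∉ A := fun h => haF (mem_powerset.mp hA h)
    rw [insert_sdiff_of_notMem _ haA, insert_sdiff_insert, sdiff_insert_of_notMem haF,
      sum_powerset_insert (fun h => haF (mem_sdiff.mp h).1),
      add_assoc, ← sum_add_distrib, add_eq_left]
    refine sum_eq_zero fun X hX => ?_
    have haX : a ∉ X := fun h => haF (mem_sdiff.mp (mem_powerset.mp hX h)).1
    rw [card_insert_of_notMem haX, union_insert, insert_union]
    ring

theorem sum_betaT_contr {r : Finset α → ℕ} (hr : IsRankFn r) {e : α} {F : Finset α}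
    (heF : e ∉ F) :
    ∑ A ∈ F.powerset, betaT (insert e (F \ A)) (contr r A) = r {e} := by
  have hbeta : ∀ A ∈ F.powerset, betaT (insert e (F \ A)) (contr r A) =
      ∑ X ∈ (F \ A).powerset, (-1) ^ X.card * ((r (insert e (A ∪ X)) : ℤ) - r (A ∪ X)) := by
    intro A _
    have hcast : ∀ X, (contr r A X : ℤ) = r (A ∪ X) - r A := fun X => by
      rw [contr, Nat.cast_sub (hr.mono _ _ subset_union_left)]
    rw [betaT_eq_neg_sum, sum_powerset_insert (fun h => heF (mem_sdiff.mp h).1),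
      ← sum_add_distrib, ← sum_neg_distrib]
    refine sum_congr rfl fun X hX => ?_
    have heX : e ∉ X := fun h => heF (mem_sdiff.mp (mem_powerset.mp hX h)).1
    rw [hcast, hcast, card_insert_of_notMem heX, union_insert]
    ring
  rw [sum_congr rfl hbeta, sum_powerset_sum_powerset_sdiff F
    (fun S => (r (insert e S) : ℤ) - r S), hr.map_empty]
  simp

end Beta

section Greedy

variable {α : Type*} [DecidableEq α] {r : Finset α → ℕ}

/-- The support function of the signed Minkowski sum `∑_{A ⊆ E} β̃(M/A) Δ_{E-A}` at `w`;
the term `A = E` vanishes because `maxOver w ∅ = 0`. -/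
noncomputable def betaSupport (E : Finset α) (r : Finset α → ℕ) (w : α → ℝ) : ℝ :=
  ∑ A ∈ E.powerset, (betaT (E \ A) (contr r A) : ℝ) * maxOver w (E \ A)

@[simp]
theorem betaSupport_empty (r : Finset α → ℕ) (w : α → ℝ) : betaSupport ∅ r w = 0 := by
  simp [betaSupport]

theorem betaSupport_eq_sum_nonneg_add_sum_neg (E : Finset α) (r : Finset α → ℕ) (w : α → ℝ) :
    betaSupport E r w =
      ∑ A ∈ E.powerset.filter (fun A => A ≠ E ∧ 0 ≤ betaT (E \ A) (contr r A)),
        (betaT (E \ A) (contr r A) : ℝ) * maxOver w (E \ A) +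
      ∑ A ∈ E.powerset.filter (fun A => A ≠ E ∧ betaT (E \ A) (contr r A) < 0),
        (betaT (E \ A) (contr r A) : ℝ) * maxOver w (E \ A) := by
  rw [betaSupport, ← sum_filter_of_ne (p := (· ≠ E)) fun A _ h hAE => h (by simp [hAE]),
    ← sum_filter_add_sum_filter_not _ fun A => 0 ≤ betaT (E \ A) (contr r A),
    filter_filter, filter_filter]
  simp only [not_le]

theorem IsRankFn.betaSupport_insert (hr : IsRankFn r) {w : α → ℝ} {e : α} {F : Finset α}
    (heF : e ∉ F) (hmax : ∀ x ∈ F, w x ≤ w e) :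
    betaSupport (insert e F) r w = w e * r {e} + betaSupport F (contr r {e}) w := by
  rw [betaSupport, sum_powerset_insert heF]
  congr 1
  · have hsdiff : ∀ A ∈ F.powerset, insert e F \ A = insert e (F \ A) := fun A hA =>
      insert_sdiff_of_notMem _ fun h => heF (mem_powerset.mp hA h)
    rw [sum_congr rfl fun A hA => by
        rw [hsdiff A hA, maxOver_insert_of_le w fun x hx => hmax x (mem_sdiff.mp hx).1],
      ← sum_mul, ← Int.cast_sum, sum_betaT_contr hr heF, mul_comm]
    norm_cast
  · refine sum_congr rfl fun A hA => ?_
    rw [insert_sdiff_insert, sdiff_insert_of_notMem heF, insert_eq, ← hr.contr_contr]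

theorem IsRankFn.isGreatest_weight_bases_insert (hr : IsRankFn r) {w : α → ℝ} {e : α}
    {F : Finset α} {y : ℝ} (heF : e ∉ F) (hmax : ∀ x ∈ F, w x ≤ w e) (he : r {e} = 1)
    (hy : IsGreatest ((fun B => ∑ i ∈ B, w i) '' bases F (contr r {e})) y) :
    IsGreatest ((fun B => ∑ i ∈ B, w i) '' bases (insert e F) r) (w e + y) := by
  obtain ⟨⟨B', hB', rfl⟩, hy⟩ := hy
  have hthrough : ∀ B ∈ bases (insert e F) r, e ∈ B → ∑ i ∈ B, w i ≤ w e + ∑ i ∈ B', w i := by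
    intro B hB heB
    rw [← insert_erase heB, hr.insert_mem_bases_insert_iff he (notMem_erase e B)] at hB
    rw [← add_sum_erase B w heB]
    exact (add_le_add_iff_left _).mpr (hy ⟨_, hB, rfl⟩)
  have heB' : e ∉ B' := fun h => heF ((mem_bases.mp hB').1 h)
  refine ⟨⟨insert e B', (hr.insert_mem_bases_insert_iff he heB').mpr hB', sum_insert heB'⟩, ?_⟩
  rintro _ ⟨B, hB, rfl⟩
  by_cases heB : e ∈ B
  · exact hthrough B hB heB
  -- a basis avoiding `e` is exchanged for one through `e`, which weighs no less as `e` is heaviest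
  obtain ⟨b, hb, hB₂⟩ :=
    hr.exists_insert_erase_mem_bases hB (mem_insert_self e F) heB (by omega)
  have hbF : b ∈ F :=
    (mem_insert.mp ((mem_bases.mp hB).1 hb)).resolve_left (ne_of_mem_of_not_mem hb heB)
  calc ∑ i ∈ B, w i = w b + ∑ i ∈ B.erase b, w i := (add_sum_erase B w hb).symm
    _ ≤ w e + ∑ i ∈ B.erase b, w i := by grw [hmax b hbF]
    _ = ∑ i ∈ insert e (B.erase b), w i :=
      (sum_insert fun h => heB (mem_of_mem_erase h)).symm
    _ ≤ w e + ∑ i ∈ B', w i := hthrough _ hB₂ (mem_insert_self _ _)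

theorem IsRankFn.isGreatest_weight_bases (hr : IsRankFn r) (w : α → ℝ) (E : Finset α) :
    IsGreatest ((fun B => ∑ i ∈ B, w i) '' bases E r) (betaSupport E r w) := by
  induction E using Finset.induction_on_max_value w generalizing r with
  | empty => simp [hr.bases_empty]
  | insert e F heF hmax ih =>
    rw [hr.betaSupport_insert heF hmax]
    rcases Nat.le_one_iff_eq_zero_or_eq_one.mp (hr.singleton_le_one e) with he | he
    · have := ih (hr.contr {e})
      rw [hr.contr_singleton_of_loop he] at this ⊢
      simpa [hr.bases_insert_of_loop he, he] using this
    · rw [he, Nat.cast_one, mul_one]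
      exact hr.isGreatest_weight_bases_insert heF hmax he (ih (hr.contr {e}))

end Greedy

theorem sum_nonempty {M ι : Type*} [AddCommMonoid M] [DecidableEq M] {s : Finset ι}
    {S : ι → Finset M} (hS : ∀ i ∈ s, (S i).Nonempty) : (∑ i ∈ s, S i).Nonempty := by
  induction s using Finset.cons_induction with
  | empty => exact ⟨0, mem_zero.mpr rfl⟩
  | cons i s hi ih =>
    rw [sum_cons]
    exact (hS i (mem_cons_self i s)).add (ih fun j hj => hS j (mem_cons_of_mem hj))

section SupportFunction

variable {V : Type*} [AddCommGroup V] [Module ℝ V] [DecidableEq V]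
  {L : Type*} [FunLike L V ℝ] [LinearMapClass L ℝ V ℝ] (f : L)

theorem maxOver_add {S T : Finset V} (hS : S.Nonempty) (hT : T.Nonempty) :
    maxOver f (S + T) = maxOver f S + maxOver f T := by
  obtain ⟨x, hx, hxS⟩ := exists_mem_eq_sup' hS f
  obtain ⟨y, hy, hyT⟩ := exists_mem_eq_sup' hT f
  rw [maxOver_eq_sup' f hS, maxOver_eq_sup' f hT, hxS, hyT, ← map_add]
  refine maxOver_eq_of_isGreatest f ⟨⟨x + y, mem_coe.mpr (add_mem_add hx hy), rfl⟩, ?_⟩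
  rintro _ ⟨z, hz, rfl⟩
  obtain ⟨u, hu, v, hv, rfl⟩ := mem_add.mp hz
  rw [map_add, map_add, ← hxS, ← hyT]
  exact add_le_add (le_sup' f hu) (le_sup' f hv)

theorem maxOver_smul {c : ℝ} (hc : 0 ≤ c) (S : Finset V) :
    maxOver f (c • S) = c * maxOver f S := by
  rcases S.eq_empty_or_nonempty with rfl | hS
  · simp
  obtain ⟨x, hx, hxS⟩ := exists_mem_eq_sup' hS f
  rw [maxOver_eq_sup' f hS, hxS, ← smul_eq_mul, ← map_smul]
  refine maxOver_eq_of_isGreatest f ⟨⟨c • x, mem_coe.mpr (smul_mem_smul_finset hx), rfl⟩, ?_⟩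
  rintro _ ⟨z, hz, rfl⟩
  obtain ⟨u, hu, rfl⟩ := mem_smul_finset.mp hz
  rw [map_smul, map_smul, ← hxS, smul_eq_mul, smul_eq_mul]
  exact mul_le_mul_of_nonneg_left (le_sup' f hu) hc

theorem maxOver_sum {ι : Type*} {s : Finset ι} {S : ι → Finset V}
    (hS : ∀ i ∈ s, (S i).Nonempty) :
    maxOver f (∑ i ∈ s, S i) = ∑ i ∈ s, maxOver f (S i) := by
  induction s using Finset.cons_induction with
  | empty => simp [← singleton_zero, maxOver_eq_sup' f (singleton_nonempty 0)]
  | cons i s hi ih =>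
    have hS' : ∀ j ∈ s, (S j).Nonempty := fun j hj => hS j (mem_cons_of_mem hj)
    rw [sum_cons, sum_cons, maxOver_add f (hS i (mem_cons_self i s)) (sum_nonempty hS'), ih hS']

theorem maxOver_sum_smul {ι : Type*} {s : Finset ι} {c : ι → ℝ} {S : ι → Finset V}
    (hc : ∀ i ∈ s, 0 ≤ c i) (hS : ∀ i ∈ s, (S i).Nonempty) :
    maxOver f (∑ i ∈ s, c i • S i) = ∑ i ∈ s, c i * maxOver f (S i) := by
  rw [maxOver_sum f fun i hi => (hS i hi).smul_finset]
  exact sum_congr rfl fun i hi => maxOver_smul f (hc i hi) (S i)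

end SupportFunction

section Separation

variable {V : Type*} [AddCommGroup V] [Module ℝ V] [TopologicalSpace V] [IsTopologicalAddGroup V]
  [ContinuousSMul ℝ V] [LocallyConvexSpace ℝ V] [T2Space V]

theorem convexHull_subset_of_maxOver_le {S T : Finset V} (hT : T.Nonempty)
    (h : ∀ f : V →L[ℝ] ℝ, maxOver f S ≤ maxOver f T) :
    convexHull ℝ (S : Set V) ⊆ convexHull ℝ (T : Set V) := by
  refine convexHull_min (fun x hx => ?_) (convex_convexHull ℝ _)
  by_contra hxT
  obtain ⟨f, u, hfT, hfx⟩ := geometric_hahn_banach_closed_point (convex_convexHull ℝ _)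
    (T.finite_toSet.isClosed_convexHull (𝕜 := ℝ)) hxT
  obtain ⟨y, hy, hyT⟩ := exists_mem_eq_sup' hT f
  have hxy : f x ≤ f y := by
    rw [← hyT, ← maxOver_eq_sup' f hT]
    exact (maxOver_eq_sup' f ⟨x, hx⟩ ▸ le_sup' f hx).trans (h f)
  linarith [hfT y (subset_convexHull ℝ _ hy)]

theorem convexHull_eq_of_maxOver_eq {S T : Finset V} (hS : S.Nonempty) (hT : T.Nonempty)
    (h : ∀ f : V →L[ℝ] ℝ, maxOver f S = maxOver f T) :
    convexHull ℝ (S : Set V) = convexHull ℝ (T : Set V) :=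
  (convexHull_subset_of_maxOver_le hT fun f => (h f).le).antisymm
    (convexHull_subset_of_maxOver_le hS fun f => (h f).ge)

theorem convexHull_add_sum_smul_eq_sum_smul [DecidableEq V] {ι : Type*} {P : Finset V}
    {Q : ι → Finset V} {s t : Finset ι} {a b : ι → ℝ} (hP : P.Nonempty)
    (hQs : ∀ i ∈ s, (Q i).Nonempty) (hQt : ∀ i ∈ t, (Q i).Nonempty)
    (ha : ∀ i ∈ s, 0 ≤ a i) (hb : ∀ i ∈ t, 0 ≤ b i)
    (h : ∀ f : V →L[ℝ] ℝ,
      maxOver f P + ∑ i ∈ s, a i * maxOver f (Q i) = ∑ i ∈ t, b i * maxOver f (Q i)) :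
    convexHull ℝ (P : Set V) + ∑ i ∈ s, a i • convexHull ℝ (Q i : Set V) =
      ∑ i ∈ t, b i • convexHull ℝ (Q i : Set V) := by
  have hconv : ∀ (u : Finset ι) (c : ι → ℝ),
      ∑ i ∈ u, c i • convexHull ℝ (Q i : Set V) = convexHull ℝ ↑(∑ i ∈ u, c i • Q i) :=
    fun u c => by simp [convexHull_sum, convexHull_smul]
  have hQs' : ∀ i ∈ s, (a i • Q i).Nonempty := fun i hi => (hQs i hi).smul_finset
  have hQt' : ∀ i ∈ t, (b i • Q i).Nonempty := fun i hi => (hQt i hi).smul_finset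
  rw [hconv, hconv, ← convexHull_add, ← coe_add]
  refine convexHull_eq_of_maxOver_eq (hP.add (sum_nonempty hQs')) (sum_nonempty hQt') fun f => ?_
  rw [maxOver_add f hP (sum_nonempty hQs'), maxOver_sum_smul f ha hQs, maxOver_sum_smul f hb hQt, h]

end Separation

section Polytope

variable {α : Type*} [DecidableEq α]

theorem indic_eq_sum_single (B : Finset α) : indic B = ∑ i ∈ B, Pi.single i (1 : ℝ) := by
  funext a
  simp [indic, Pi.single_apply]

theorem matroidPolytope_eq_convexHull (E : Finset α) (r : Finset α → ℕ) :
    matroidPolytope E r = convexHull ℝ ↑((bases E r).image indic) := by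
  rw [matroidPolytope, coe_image]
  congr 1
  ext x
  simp [mem_bases, and_assoc, eq_comm]

theorem simplexFace_eq_convexHull_s4 (J : Finset α) :
    simplexFace J = convexHull ℝ ↑(J.image fun i => Pi.single i (1 : ℝ)) := by
  rw [simplexFace, coe_image]
  congr 1
  ext x
  simp [eq_comm]

theorem IsRankFn.maxOver_image_indic_bases {r : Finset α → ℕ} (hr : IsRankFn r)
    (f : (α → ℝ) →L[ℝ] ℝ) (E : Finset α) :
    maxOver f ((bases E r).image indic) = betaSupport E r fun i => f (Pi.single i 1) := by
  rw [maxOver_image]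
  refine maxOver_eq_of_isGreatest _ ?_
  convert hr.isGreatest_weight_bases (fun i => f (Pi.single i 1)) E using 3
  simp [indic_eq_sum_single]

end Polytope

theorem matroidPolytope_signed_sum_general {α : Type*} [DecidableEq α]
    (E : Finset α) (r : Finset α → ℕ)
    (hcard : ∀ A, r A ≤ A.card)
    (hmono : ∀ A B, A ⊆ B → r A ≤ r B)
    (hsub : ∀ A B, r (A ∪ B) + r (A ∩ B) ≤ r A + r B) :
    matroidPolytope E r +
        ∑ A ∈ E.powerset.filter
            (fun A => A ≠ E ∧ betaT (E \ A) (contr r A) < 0),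
          (-(betaT (E \ A) (contr r A) : ℝ)) • simplexFace (E \ A)
      = ∑ A ∈ E.powerset.filter
            (fun A => A ≠ E ∧ 0 ≤ betaT (E \ A) (contr r A)),
          ((betaT (E \ A) (contr r A) : ℝ)) • simplexFace (E \ A) := by
  have hr : IsRankFn r := ⟨hcard, hmono, hsub⟩
  have hbases : (bases E r).Nonempty := by
    simpa using (hr.isGreatest_weight_bases 0 E).nonempty
  have hface : ∀ (p : Finset α → Prop) [DecidablePred p],
      ∀ A ∈ E.powerset.filter (fun A => A ≠ E ∧ p A),
        ((E \ A).image fun i => Pi.single i (1 : ℝ)).Nonempty := fun p _ A hA => by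
    simp only [mem_filter, mem_powerset] at hA
    exact (sdiff_nonempty.mpr fun h => hA.2.1 (hA.1.antisymm h)).image _
  simp only [matroidPolytope_eq_convexHull, simplexFace_eq_convexHull_s4]
  refine convexHull_add_sum_smul_eq_sum_smul (hbases.image indic) (hface _) (hface _)
    (fun A hA => neg_nonneg.mpr (Int.cast_nonpos.mpr (mem_filter.mp hA).2.2.le))
    (fun A hA => Int.cast_nonneg_iff.mpr (mem_filter.mp hA).2.2) fun f => ?_
  rw [hr.maxOver_image_indic_bases, betaSupport_eq_sum_nonneg_add_sum_neg]
  simp only [maxOver_image, neg_mul, sum_neg_distrib, Function.comp_def]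
  ring

/-- Theorem 2.6: `P_M = ∑_{A⊆E} β̃(M/A) Δ_{E−A}` as a signed Minkowski sum, i.e.
`P_M + ∑_{β̃(M/A)<0} (−β̃(M/A)) Δ_{E−A} = ∑_{β̃(M/A)≥0} β̃(M/A) Δ_{E−A}`. -/
theorem matroidPolytope_signed_sum {α : Type*} [DecidableEq α]
    (E : Finset α) (r : Finset α → ℕ)
    (hcard : ∀ A, r A ≤ A.card)
    (hmono : ∀ A B, A ⊆ B → r A ≤ r B)
    (hsub : ∀ A B, r (A ∪ B) + r (A ∩ B) ≤ r A + r B)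
    (hE : ∀ A, r (A ∩ E) = r A) :
    matroidPolytope E r +
        ∑ A ∈ E.powerset.filter
            (fun A => A ≠ E ∧ betaT (E \ A) (contr r A) < 0),
          (-(betaT (E \ A) (contr r A) : ℝ)) • simplexFace (E \ A)
      = ∑ A ∈ E.powerset.filter
            (fun A => A ≠ E ∧ 0 ≤ betaT (E \ A) (contr r A)),
          ((betaT (E \ A) (contr r A) : ℝ)) • simplexFace (E \ A) :=
  matroidPolytope_signed_sum_general E r hcard hmono hsub
end

section
/- An (n−1)-tuple (J_1,...,J_{n−1}) of subsets of [n] satisfies |J_{i_1} ∩ ... ∩ J_{i_k}| < n − k for all distinct i_1,...,i_k if and only if for every k ∈ [n], the family ([n]−J_1,...,[n]−J_{n−1}) admits a system of distinct representatives avoiding k (the dragon marriage condition). -/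
open Finset
open scoped Classical

/-- The dragon marriage condition: an `(n−1)`-tuple `(J_1,…,J_{n−1})` of subsets
of `[n]` satisfies `|J_{i_1} ∩ ⋯ ∩ J_{i_k}| < n − k` for all distinct
`i_1,…,i_k` if and only if for every `k ∈ [n]` the family
`([n]−J_1,…,[n]−J_{n−1})` admits a system of distinct representatives
avoiding `k`. -/
theorem dragon_marriage (n : ℕ) (J : Fin (n - 1) → Finset (Fin n)) :
    (∀ (S : Finset (Fin (n - 1))) (hS : S.Nonempty),
        (S.inf' hS J).card + S.card < n)
      ↔ ∀ k : Fin n, ∃ a : Fin (n - 1) → Fin n,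
          Function.Injective a ∧ ∀ i, a i ∉ J i ∧ a i ≠ k := by
  constructor
  · intro h k
    have hall : ∀ S : Finset (Fin (n - 1)),
        S.card ≤ (S.biUnion (fun i => ((J i)ᶜ).erase k)).card := by
      intro S
      rcases S.eq_empty_or_nonempty with rfl | hS
      · simp
      · have hsub : ((S.inf' hS J)ᶜ).erase k ⊆
            S.biUnion (fun i => ((J i)ᶜ).erase k) := by
          intro x hx
          rw [Finset.mem_erase, Finset.mem_compl, Finset.inf'_eq_inf,
            Finset.mem_inf] at hx
          push_neg at hx
          obtain ⟨hxk, i, hiS, hxi⟩ := hx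
          exact Finset.mem_biUnion.2 ⟨i, hiS, Finset.mem_erase.2
            ⟨hxk, Finset.mem_compl.2 hxi⟩⟩
        have h1 := h S hS
        have h2 : S.card + 1 ≤ ((S.inf' hS J)ᶜ).card := by
          rw [Finset.card_compl, Fintype.card_fin]
          omega
        have h3 := Finset.card_le_card hsub
        have h4 : ((S.inf' hS J)ᶜ).card - 1 ≤
            (((S.inf' hS J)ᶜ).erase k).card :=
          Finset.pred_card_le_card_erase
        omega
    obtain ⟨f, hf, hmem⟩ :=
      (Finset.all_card_le_biUnion_card_iff_existsInjective'
        (fun i : Fin (n - 1) => ((J i)ᶜ).erase k)).1 hall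
    refine ⟨f, hf, fun i => ?_⟩
    have h1 := hmem i
    rw [Finset.mem_erase, Finset.mem_compl] at h1
    exact ⟨h1.2, h1.1⟩
  · intro h S hS
    by_contra hlt
    push_neg at hlt
    set T := S.inf' hS J with hT
    have hTsub : ∀ i ∈ S, T ⊆ J i := fun i hi => Finset.inf'_le _ hi
    rcases Finset.eq_empty_or_nonempty Tᶜ with hTc | ⟨k, hk⟩
    · obtain ⟨i, hi⟩ := hS
      have hn : 0 < n := by have := i.isLt; omega
      obtain ⟨a, ha, hmem⟩ := h ⟨0, hn⟩
      have hai : a i ∈ T := by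
        by_contra hx
        exact Finset.notMem_empty _ (hTc ▸ Finset.mem_compl.2 hx)
      exact (hmem i).1 (hTsub i hi hai)
    · obtain ⟨a, ha, hmem⟩ := h k
      have hmap : ∀ i ∈ S, a i ∈ Tᶜ.erase k := by
        intro i hi
        refine Finset.mem_erase.2 ⟨(hmem i).2, Finset.mem_compl.2 fun hx => ?_⟩
        exact (hmem i).1 (hTsub i hi hx)
      have hcard : S.card ≤ (Tᶜ.erase k).card :=
        Finset.card_le_card_of_injOn a hmap (fun x _ y _ hxy => ha hxy)
      have h1 : (Tᶜ.erase k).card = Tᶜ.card - 1 :=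
        Finset.card_erase_of_mem hk
      have h2 : Tᶜ.card = n - T.card := by
        rw [Finset.card_compl, Fintype.card_fin]
      have h3 : T.card ≤ n := by
        have := Finset.card_le_card (Finset.subset_univ T)
        simpa [Fintype.card_fin] using this
      have hTk : 0 < Tᶜ.card := Finset.card_pos.2 ⟨k, hk⟩
      omega
end

section
/- For nonnegative reals y_I (I ⊆ [n], I nonempty), the Minkowski sum Σ_I y_I D_I equals the Q-polytope Q_n({z_J}) where z_J = Σ_{I : I∩J ≠ ∅} y_I, and D_I = conv({0} ∪ {e_i : i ∈ I}). -/
/-!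
Induct on the family of simplices. Every partial sum `z` of the weights `y_I·[I ∩ J ≠ ∅]` is
monotone and submodular, so it suffices that `c • D_A + Q(f) = Q(c·[A ∩ · ≠ ∅] + f)` for monotone
submodular `f` and `c ≥ 0`. The inclusion `⊆` holds termwise. For `⊇`, a point `t` of the right
side is split off greedily, one vertex `a` of `A` at a time: `a` receives the largest excess
`t(J) - f(J)` over the sets `J ∋ a` avoiding the vertices not yet treated, which leaves a point of
the same kind of polytope for the remaining vertices and budget.
-/

open Finset
open scoped Pointwise Classical

/-- The Q-polytope `Q_n({z_J}) = {t ∈ ℝ^n : t_i ≥ 0, ∑_{i∈J} t_i ≤ z_J}`. -/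
def Qpoly (n : ℕ) (z : Finset (Fin n) → ℝ) : Set (Fin n → ℝ) :=
  {t | (∀ i, 0 ≤ t i) ∧ ∀ J : Finset (Fin n), ∑ i ∈ J, t i ≤ z J}

/-- `D_I = conv{0, e_i : i ∈ I}`. -/
def Dsimp {α : Type*} [DecidableEq α] (I : Finset α) : Set (α → ℝ) :=
  convexHull ℝ (insert 0 {x | ∃ i ∈ I, x = Pi.single i (1 : ℝ)})

def IsSubmodular {α : Type*} [DecidableEq α] (f : Finset α → ℝ) : Prop :=
  ∀ J K, f (J ∪ K) + f (J ∩ K) ≤ f J + f K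

def hitWeight {α : Type*} [DecidableEq α] (A : Finset α) (c : ℝ) (J : Finset α) : ℝ :=
  if Disjoint A J then 0 else c

section SetFunctions

variable {α : Type*} [DecidableEq α]

theorem IsSubmodular.add {f g : Finset α → ℝ} (hf : IsSubmodular f) (hg : IsSubmodular g) :
    IsSubmodular (f + g) := fun J K => by
  simp only [Pi.add_apply]
  linarith [hf J K, hg J K]

theorem isSubmodular_zero : IsSubmodular (0 : Finset α → ℝ) := fun _ _ => by simp

theorem isSubmodular_sum {ι : Type*} (s : Finset ι) {f : ι → Finset α → ℝ}
    (hf : ∀ i ∈ s, IsSubmodular (f i)) : IsSubmodular (∑ i ∈ s, f i) := by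
  induction s using Finset.induction_on with
  | empty => simpa using isSubmodular_zero
  | insert i s hi ih =>
    rw [Finset.sum_insert hi]
    exact (hf i (mem_insert_self i s)).add (ih fun j hj => hf j (mem_insert_of_mem hj))

theorem hitWeight_nonneg {A : Finset α} {c : ℝ} (hc : 0 ≤ c) (J : Finset α) :
    0 ≤ hitWeight A c J := by
  unfold hitWeight; split_ifs <;> simp [hc]

theorem hitWeight_of_disjoint {A J : Finset α} {c : ℝ} (h : Disjoint A J) :
    hitWeight A c J = 0 := if_pos h

theorem hitWeight_of_not_disjoint {A J : Finset α} {c : ℝ} (h : ¬Disjoint A J) :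
    hitWeight A c J = c := if_neg h

theorem hitWeight_le {A : Finset α} {c : ℝ} (hc : 0 ≤ c) (J : Finset α) :
    hitWeight A c J ≤ c := by
  unfold hitWeight; split_ifs <;> simp [hc]

theorem monotone_hitWeight (A : Finset α) {c : ℝ} (hc : 0 ≤ c) : Monotone (hitWeight A c) :=
  fun J K hJK => by
    unfold hitWeight
    split_ifs with hJ hK hK
    exacts [le_rfl, hc, absurd (hK.mono_right hJK) hJ, le_rfl]

theorem isSubmodular_hitWeight (A : Finset α) {c : ℝ} (hc : 0 ≤ c) :
    IsSubmodular (hitWeight A c) := fun J K => by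
  have hJK : Disjoint A J ∨ Disjoint A K → Disjoint A (J ∩ K) := by
    rintro (h | h)
    exacts [h.mono_right inter_subset_left, h.mono_right inter_subset_right]
  unfold hitWeight
  split_ifs <;> simp_all [disjoint_union_right]

theorem IsSubmodular.excess_add_excess_le {f : Finset α → ℝ} (hf : IsSubmodular f)
    (t : α → ℝ) (J K : Finset α) :
    (∑ i ∈ J, t i - f J) + (∑ i ∈ K, t i - f K)
      ≤ (∑ i ∈ J ∪ K, t i - f (J ∪ K)) + (∑ i ∈ J ∩ K, t i - f (J ∩ K)) := by
  linarith [hf J K, Finset.sum_union_inter (s₁ := J) (s₂ := K) (f := t)]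

end SetFunctions

section Dsimp

variable {α : Type*} [DecidableEq α]

theorem convex_Dsimp (A : Finset α) : Convex ℝ (Dsimp A) := convex_convexHull ℝ _

theorem zero_mem_Dsimp (A : Finset α) : (0 : α → ℝ) ∈ Dsimp A :=
  subset_convexHull ℝ _ (Set.mem_insert _ _)

theorem single_mem_Dsimp {A : Finset α} {a : α} (ha : a ∈ A) : Pi.single a 1 ∈ Dsimp A :=
  subset_convexHull ℝ _ (Set.mem_insert_of_mem _ ⟨a, ha, rfl⟩)

theorem Dsimp_mono {A B : Finset α} (h : A ⊆ B) : Dsimp A ⊆ Dsimp B :=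
  convexHull_mono <| Set.insert_subset_insert fun _ ⟨i, hi, hx⟩ => ⟨i, h hi, hx⟩

end Dsimp

section Qpoly

variable {n : ℕ}

theorem convex_Qpoly (z : Finset (Fin n) → ℝ) : Convex ℝ (Qpoly n z) := by
  rintro s ⟨hs0, hsJ⟩ t ⟨ht0, htJ⟩ a b ha hb hab
  refine ⟨fun i => add_nonneg (mul_nonneg ha (hs0 i)) (mul_nonneg hb (ht0 i)), fun J => ?_⟩
  simp only [Pi.add_apply, Pi.smul_apply, smul_eq_mul, sum_add_distrib, ← mul_sum]
  calc a * ∑ i ∈ J, s i + b * ∑ i ∈ J, t i ≤ a * z J + b * z J :=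
        add_le_add (mul_le_mul_of_nonneg_left (hsJ J) ha) (mul_le_mul_of_nonneg_left (htJ J) hb)
    _ = z J := by rw [← add_mul, hab, one_mul]

theorem Qpoly_zero : Qpoly n 0 = 0 := by
  ext t
  refine ⟨fun ⟨ht0, htJ⟩ => funext fun i => le_antisymm ?_ (ht0 i), ?_⟩
  · simpa using htJ {i}
  · rintro (rfl : t = 0)
    exact ⟨fun _ => le_rfl, fun _ => by simp⟩

theorem Qpoly_add_subset (f g : Finset (Fin n) → ℝ) :
    Qpoly n f + Qpoly n g ⊆ Qpoly n (f + g) := by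
  rintro _ ⟨s, ⟨hs0, hsJ⟩, t, ⟨ht0, htJ⟩, rfl⟩
  refine ⟨fun i => add_nonneg (hs0 i) (ht0 i), fun J => ?_⟩
  simp only [Pi.add_apply, sum_add_distrib]
  exact add_le_add (hsJ J) (htJ J)

theorem smul_Dsimp_subset_Qpoly (A : Finset (Fin n)) {c : ℝ} (hc : 0 ≤ c) :
    c • Dsimp A ⊆ Qpoly n (hitWeight A c) := by
  rw [Dsimp, ← convexHull_smul]
  refine convexHull_min ?_ (convex_Qpoly _)
  rintro _ ⟨x, (rfl | ⟨i, hi, rfl⟩), rfl⟩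
  · exact ⟨fun _ => by simp, fun J => by simpa using hitWeight_nonneg hc J⟩
  · simp only [← Pi.single_smul, smul_eq_mul, mul_one]
    refine ⟨fun j => by rw [Pi.single_apply]; split_ifs <;> simp [hc], fun J => ?_⟩
    rw [sum_pi_single', hitWeight]
    split_ifs with hiJ hAJ
    exacts [absurd hiJ (disjoint_left.1 hAJ hi), le_rfl, le_rfl, hc]

end Qpoly

section Splitting

variable {n : ℕ} {f : Finset (Fin n) → ℝ}

theorem sub_single_mem_Qpoly {a : Fin n} {B : Finset (Fin n)} {c M : ℝ} (hc : 0 ≤ c)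
    {t : Fin n → ℝ} (ht : t ∈ Qpoly n (hitWeight (insert a B) c + f)) (hMt : M ≤ t a)
    (hM_le : ∀ J, a ∈ J → Disjoint B J → ∑ i ∈ J, t i - f J ≤ M)
    (hM_ge : ∀ J, a ∉ J → ¬Disjoint B J → ∑ i ∈ J, t i - f J ≤ c - M) :
    t - Pi.single a M ∈ Qpoly n (hitWeight B (c - M) + f) := by
  obtain ⟨ht0, htJ⟩ := ht
  refine ⟨fun i => ?_, fun J => ?_⟩
  · rw [Pi.sub_apply, Pi.single_apply]
    split_ifs with hi
    · subst hi; linarith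
    · linarith [ht0 i]
  · have hJ := htJ J
    simp only [Pi.add_apply, Pi.sub_apply, sum_sub_distrib, sum_pi_single'] at hJ ⊢
    by_cases haJ : a ∈ J <;> by_cases hBJ : Disjoint B J
    · rw [if_pos haJ, hitWeight_of_disjoint hBJ]
      linarith [hM_le J haJ hBJ]
    · rw [if_pos haJ, hitWeight_of_not_disjoint hBJ]
      linarith [hitWeight_le (A := insert a B) hc J]
    · rw [hitWeight_of_disjoint (disjoint_insert_left.2 ⟨haJ, hBJ⟩)] at hJ
      rw [if_neg haJ, hitWeight_of_disjoint hBJ]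
      linarith
    · rw [if_neg haJ, hitWeight_of_not_disjoint hBJ]
      linarith [hM_ge J haJ hBJ]

/-- One greedy step: the part of `t` charged to the new vertex `a` is the largest excess
`t(J) - f(J)` over the sets `J ∋ a` missing `B`; submodularity of `f` keeps the remaining
budget `c - M` large enough for the sets meeting `B`. -/
theorem exists_sub_single_mem_Qpoly (hmono : Monotone f) (hsub : IsSubmodular f) {a : Fin n}
    {B : Finset (Fin n)} (ha : a ∉ B) {c : ℝ} (hc : 0 ≤ c) {t : Fin n → ℝ}
    (ht : t ∈ Qpoly n (hitWeight (insert a B) c + f)) :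
    ∃ M, 0 ≤ M ∧ M ≤ c ∧ t - Pi.single a M ∈ Qpoly n (hitWeight B (c - M) + f) := by
  set e : Finset (Fin n) → ℝ := fun J => ∑ i ∈ J, t i - f J with he
  have he_le : ∀ J, e J ≤ hitWeight (insert a B) c J := fun J => sub_le_iff_le_add.2 (ht.2 J)
  have he_le_c : ∀ J, e J ≤ c := fun J => (he_le J).trans (hitWeight_le hc J)
  have he_nonpos : ∀ J, a ∉ J → Disjoint B J → e J ≤ 0 := fun J haJ hBJ =>
    (he_le J).trans_eq (hitWeight_of_disjoint (disjoint_insert_left.2 ⟨haJ, hBJ⟩))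
  obtain ⟨J₀, hJ₀, hJ₀max⟩ := (univ.filter fun J => a ∈ J ∧ Disjoint B J).exists_max_image e
    ⟨{a}, by simpa using ha⟩
  simp only [mem_filter, mem_univ, true_and] at hJ₀ hJ₀max
  obtain ⟨haJ₀, hBJ₀⟩ := hJ₀
  have he₀_le_ta : e J₀ ≤ t a := by
    have h := he_nonpos (J₀.erase a) (notMem_erase a J₀) (hBJ₀.mono_right (erase_subset a J₀))
    have := hmono (erase_subset a J₀)
    simp only [he] at h ⊢
    rw [← add_sum_erase J₀ t haJ₀]
    linarith
  have he_add_he₀ : ∀ J, a ∉ J → e J + e J₀ ≤ c := fun J haJ => by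
    have h := he_nonpos (J ∩ J₀) (fun h => haJ (mem_of_mem_inter_left h))
      (hBJ₀.mono_right inter_subset_right)
    linarith [hsub.excess_add_excess_le t J J₀, he_le_c (J ∪ J₀)]
  refine ⟨max 0 (e J₀), le_max_left _ _, max_le hc (he_le_c J₀),
    sub_single_mem_Qpoly hc ht (max_le (ht.1 a) he₀_le_ta)
      (fun J haJ hBJ => (hJ₀max J ⟨haJ, hBJ⟩).trans (le_max_right _ _))
      (fun J haJ _ => le_sub_comm.1 (max_le (sub_nonneg.2 (he_le_c J)) ?_))⟩
  linarith [he_add_he₀ J haJ]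

theorem Qpoly_hitWeight_add_subset (hmono : Monotone f) (hsub : IsSubmodular f)
    (A : Finset (Fin n)) {c : ℝ} (hc : 0 ≤ c) :
    Qpoly n (hitWeight A c + f) ⊆ c • Dsimp A + Qpoly n f := by
  induction A using Finset.induction_on generalizing c with
  | empty =>
    intro t ht
    have h : hitWeight (∅ : Finset (Fin n)) c = 0 :=
      funext fun J => hitWeight_of_disjoint (disjoint_empty_left J)
    rw [h, zero_add] at ht
    exact ⟨0, by simpa using Set.smul_mem_smul_set (a := c) (zero_mem_Dsimp ∅), t, ht,
      zero_add t⟩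
  | insert a B ha ih =>
    intro t ht
    obtain ⟨M, hM0, hMc, hM⟩ := exists_sub_single_mem_Qpoly hmono hsub ha hc ht
    obtain ⟨u, hu, w, hw, huw⟩ := ih (sub_nonneg.2 hMc) hM
    refine ⟨Pi.single a M + u, ?_, w, hw, ?_⟩
    · rw [← add_sub_cancel M c, (convex_Dsimp _).add_smul hM0 (sub_nonneg.2 hMc)]
      refine Set.add_mem_add ?_ (Set.smul_set_mono (Dsimp_mono (subset_insert a B)) hu)
      have h := Set.smul_mem_smul_set (a := M) (single_mem_Dsimp (mem_insert_self a B))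
      rwa [← Pi.single_smul, smul_eq_mul, mul_one] at h
    · show Pi.single a M + u + w = t
      rw [add_assoc, show u + w = _ from huw, add_sub_cancel]

theorem smul_Dsimp_add_Qpoly (hmono : Monotone f) (hsub : IsSubmodular f)
    (A : Finset (Fin n)) {c : ℝ} (hc : 0 ≤ c) :
    c • Dsimp A + Qpoly n f = Qpoly n (hitWeight A c + f) :=
  (Set.add_subset_add (smul_Dsimp_subset_Qpoly A hc) subset_rfl |>.trans
    (Qpoly_add_subset _ _)).antisymm (Qpoly_hitWeight_add_subset hmono hsub A hc)

end Splitting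

theorem sum_smul_Dsimp_eq_Qpoly {n : ℕ} {y : Finset (Fin n) → ℝ} (hy : ∀ I, 0 ≤ y I)
    (S : Finset (Finset (Fin n))) :
    ∑ I ∈ S, y I • Dsimp I = Qpoly n (∑ I ∈ S, hitWeight I (y I)) := by
  induction S using Finset.induction_on with
  | empty => simp [Qpoly_zero]
  | insert A S hA ih =>
    have hmono : Monotone (∑ I ∈ S, hitWeight I (y I)) := fun J K hJK => by
      simp only [Finset.sum_apply]
      exact sum_le_sum fun I _ => monotone_hitWeight I (hy I) hJK
    rw [sum_insert hA, sum_insert hA, ih, smul_Dsimp_add_Qpoly hmono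
      (isSubmodular_sum S fun I _ => isSubmodular_hitWeight I (hy I)) A (hy A)]

/-- Proposition 4.2: for nonnegative `y_I` (over nonempty `I ⊆ [n]`), the
Minkowski sum `∑ y_I D_I` is the Q-polytope `Q_n({z_J})` with
`z_J = ∑_{I : I∩J ≠ ∅} y_I`. -/
theorem sum_Dsimp_eq_Qpoly (n : ℕ) (y : Finset (Fin n) → ℝ) (hy : ∀ I, 0 ≤ y I) :
    ∑ I ∈ (Finset.univ : Finset (Fin n)).powerset.filter (fun I => I.Nonempty),
        y I • Dsimp I
      = Qpoly n (fun J => ∑ I ∈ (Finset.univ : Finset (Fin n)).powerset.filter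
          (fun I => (I ∩ J).Nonempty), y I) := by
  rw [sum_smul_Dsimp_eq_Qpoly hy]
  congr 1
  funext J
  rw [Finset.sum_apply, sum_filter_of_ne, sum_filter]
  · exact sum_congr rfl fun I _ => by
      simp only [hitWeight, ← not_disjoint_iff_nonempty_inter, ite_not]
  · intro I _ hI
    rw [nonempty_iff_ne_empty]
    rintro rfl
    exact hI (hitWeight_of_disjoint (disjoint_empty_left J))
end
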